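/- arXiv:2107.05610 — 2 statements merged into one kernel-verified Lean document; each statement's English description precedes it below -/
import Mathlib

section
/- Suppose positive real-valued differentiable functions P_1, ..., P_n : ℝ → ℝ satisfy the Lotka–Volterra equations dP_i/dt = f_i(P_1(t), ..., P_n(t)) · P_i(t) for continuous functions f_i : [0,∞)^n → ℝ. Let p_i(t) = P_i(t) / Σ_j P_j(t) and let f̄(t) = Σ_j p_j(t) f_j(P_1(t), ..., P_n(t)) be the mean fitness. Then for every time t, Σ_{i=1}^n ṗ_i(t) f_i(P_1(t), ..., P_n(t)) = Σ_{j=1}^n p_j(t) (f_j(P_1(t), ..., P_n(t)) − f̄(t))², i.e. the sum Σ_i ṗ_i f_i equals the variance in fitness. -/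
/-!
Under the Lotka–Volterra equations the frequencies obey the replicator equation
`ṗᵢ = pᵢ (fᵢ - f̄)`, so `∑ ṗᵢ fᵢ = ∑ pᵢ (fᵢ - f̄) fᵢ`; this differs from the variance
`∑ pᵢ (fᵢ - f̄)²` by `f̄ ∑ pᵢ (fᵢ - f̄) = 0`, the mean deviation from the mean.
-/

open Finset

variable {ι : Type*} [Fintype ι]

theorem sum_mul_sub_mean_mul_eq_sum_mul_sub_mean_sq (w F : ι → ℝ) (hw : ∑ i, w i = 1) :
    ∑ i, w i * (F i - ∑ j, w j * F j) * F i = ∑ i, w i * (F i - ∑ j, w j * F j) ^ 2 := by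
  set m := ∑ j, w j * F j
  have hdev : ∑ i, w i * (F i - m) = 0 := by
    simp only [mul_sub, sum_sub_distrib, ← sum_mul, hw, m]
    ring
  rw [← sub_eq_zero, ← sum_sub_distrib]
  calc ∑ i, (w i * (F i - m) * F i - w i * (F i - m) ^ 2)
      = (∑ i, w i * (F i - m)) * m := by rw [sum_mul]; congr 1; ext i; ring
    _ = 0 := by rw [hdev, zero_mul]

theorem sum_div_sum_self {x : ι → ℝ} (hx : ∑ j, x j ≠ 0) : ∑ i, x i / ∑ j, x j = 1 := by
  rw [← sum_div, div_self hx]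

theorem hasDerivAt_div_sum_of_hasDerivAt_mul {P : ι → ℝ → ℝ} {F : ι → ℝ} {t : ℝ}
    (hP : ∀ i, HasDerivAt (P i) (F i * P i t) t) (hS : ∑ j, P j t ≠ 0) (i : ι) :
    HasDerivAt (fun s => P i s / ∑ j, P j s)
      ((P i t / ∑ j, P j t) * (F i - ∑ j, (P j t / ∑ k, P k t) * F j)) t := by
  have hsum : HasDerivAt (fun s => ∑ j, P j s) (∑ j, F j * P j t) t :=
    HasDerivAt.fun_sum fun j _ => hP j
  refine ((hP i).fun_div hsum hS).congr_deriv ?_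
  simp only [div_mul_eq_mul_div, ← sum_div, mul_comm (P _ t) (F _)]
  field_simp

theorem sum_deriv_mul_fitness_eq_variance_general
    (n : ℕ) (P : Fin n → ℝ → ℝ) (f : Fin n → (Fin n → ℝ) → ℝ)
    (hpos : ∀ i t, 0 < P i t)
    (hLV : ∀ i t, HasDerivAt (P i) (f i (fun j => P j t) * P i t) t)
    (p : Fin n → ℝ → ℝ)
    (hp : ∀ i t, p i t = P i t / ∑ j, P j t)
    (fbar : ℝ → ℝ)
    (hfbar : ∀ t, fbar t = ∑ j, p j t * f j (fun k => P k t))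
    (t : ℝ) :
    ∑ i, deriv (p i) t * f i (fun k => P k t)
      = ∑ j, p j t * (f j (fun k => P k t) - fbar t) ^ 2 := by
  obtain _ | _ := isEmpty_or_nonempty (Fin n)
  · simp
  have hS : ∑ j, P j t ≠ 0 := (sum_pos (fun j _ => hpos j t) univ_nonempty).ne'
  have hreplicator : ∀ i, deriv (p i) t = p i t * (f i (fun k => P k t) - fbar t) := by
    intro i
    rw [show p i = fun s => P i s / ∑ j, P j s from funext (hp i), hfbar]
    simp only [hp]
    exact (hasDerivAt_div_sum_of_hasDerivAt_mul (fun j => hLV j t) hS i).deriv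
  have hsum_p : ∑ i, p i t = 1 := by simp only [hp]; exact sum_div_sum_self hS
  simp only [hreplicator, hfbar]
  exact sum_mul_sub_mean_mul_eq_sum_mul_sub_mean_sq _ _ hsum_p

/-- **Theorem 1 (Price/Ewens part of Fisher's fundamental theorem).**
If positive differentiable populations `P i` obey the Lotka–Volterra equations
`(P i)' = f i (P t) * P i t` with each fitness `f i` continuous on `[0,∞)^n`,
and `p i = P i / ∑ j, P j`, then `∑ i, ṗ i * f i (P t)` equals the variance in
fitness `∑ j, p j * (f j (P t) - f̄)^2`, where `f̄ = ∑ j, p j * f j (P t)`. -/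
theorem sum_deriv_mul_fitness_eq_variance
    (n : ℕ) (P : Fin n → ℝ → ℝ) (f : Fin n → (Fin n → ℝ) → ℝ)
    (hpos : ∀ i t, 0 < P i t)
    (hPdiff : ∀ i, Differentiable ℝ (P i))
    (hcont : ∀ i, ContinuousOn (f i) {x : Fin n → ℝ | ∀ j, 0 ≤ x j})
    (hLV : ∀ i t, HasDerivAt (P i) (f i (fun j => P j t) * P i t) t)
    (p : Fin n → ℝ → ℝ)
    (hp : ∀ i t, p i t = P i t / ∑ j, P j t)
    (fbar : ℝ → ℝ)
    (hfbar : ∀ t, fbar t = ∑ j, p j t * f j (fun k => P k t))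
    (t : ℝ) :
    ∑ i, deriv (p i) t * f i (fun k => P k t)
      = ∑ j, p j t * (f j (fun k => P k t) - fbar t) ^ 2 :=
  sum_deriv_mul_fitness_eq_variance_general n P f hpos hLV p hp fbar hfbar t
end

section
/- Suppose positive real-valued differentiable functions P_1, ..., P_n : ℝ → ℝ satisfy the Lotka–Volterra equations dP_i/dt = f_i(P_1(t), ..., P_n(t)) · P_i(t) for continuous functions f_i : [0,∞)^n → ℝ, and let p_i(t) = P_i(t) / Σ_j P_j(t). Then the square of the Fisher speed of the probability distribution p(t) = (p_1(t), ..., p_n(t)) equals the variance in fitness: Σ_{i=1}^n ṗ_i(t)² / p_i(t) = Σ_{j=1}^n p_j(t) (f_j(P_1(t), ..., P_n(t)) − f̄(t))², where f̄(t) = Σ_j p_j(t) f_j(P_1(t), ..., P_n(t)). -/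
/-!
The frequencies `p i = P i / ∑ j, P j` of a Lotka–Volterra system obey the replicator equation
`ṗ i = p i (f i - f̄)`, by the quotient rule. Squaring and dividing by `p i` then turns the squared
Fisher speed `∑ i, ṗ i ^ 2 / p i` term by term into the variance `∑ i, p i (f i - f̄) ^ 2`.
-/

open Finset

theorem hasDerivAt_div_sum_of_hasDerivAt_mul_self {ι : Type*} [Fintype ι] {P : ι → ℝ → ℝ}
    {g : ι → ℝ} {t : ℝ} (hP : ∀ i, HasDerivAt (P i) (g i * P i t) t) (hS : ∑ j, P j t ≠ 0)
    (i : ι) :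
    HasDerivAt (fun s => P i s / ∑ j, P j s)
      (P i t / (∑ k, P k t) * (g i - ∑ j, P j t / (∑ k, P k t) * g j)) t := by
  have hSum : HasDerivAt (fun s => ∑ j, P j s) (∑ j, g j * P j t) t :=
    HasDerivAt.fun_sum fun j _ => hP j
  refine ((hP i).fun_div hSum hS).congr_deriv ?_
  simp only [div_mul_eq_mul_div, ← sum_div, mul_comm (g _)]
  field_simp

theorem sq_mul_div_self {K : Type*} [Field K] (a b : K) : (a * b) ^ 2 / a = a * b ^ 2 := by
  rcases eq_or_ne a 0 with rfl | ha
  · simp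
  · field_simp

theorem fisher_speed_sq_eq_variance_general
    (n : ℕ) (P : Fin n → ℝ → ℝ) (f : Fin n → (Fin n → ℝ) → ℝ)
    (hpos : ∀ i t, 0 < P i t)
    (hLV : ∀ i t, HasDerivAt (P i) (f i (fun j => P j t) * P i t) t)
    (p : Fin n → ℝ → ℝ)
    (hp : ∀ i t, p i t = P i t / ∑ j, P j t)
    (fbar : ℝ → ℝ)
    (hfbar : ∀ t, fbar t = ∑ j, p j t * f j (fun k => P k t))
    (t : ℝ) :
    ∑ i, (deriv (p i) t) ^ 2 / p i t
      = ∑ j, p j t * (f j (fun k => P k t) - fbar t) ^ 2 := by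
  rcases isEmpty_or_nonempty (Fin n) with _ | _
  · simp
  have hS : ∑ j, P j t ≠ 0 := (sum_pos (fun j _ => hpos j t) univ_nonempty).ne'
  have hderiv : ∀ i, deriv (p i) t = p i t * (f i (fun k => P k t) - fbar t) := fun i => by
    rw [show p i = fun s => P i s / ∑ j, P j s from funext (hp i),
      (hasDerivAt_div_sum_of_hasDerivAt_mul_self (hLV · t) hS i).deriv, hfbar]
    simp only [hp]
  simp only [hderiv, sq_mul_div_self]

/-- **Theorem 2 (fundamental theorem of natural selection, Fisher-speed form).**
If positive differentiable populations `P i` obey the Lotka–Volterra equations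
with continuous fitness functions `f i` on `[0,∞)^n`, and `p i = P i / ∑ j, P j`,
then the square of the Fisher speed of `p`, namely `∑ i, (ṗ i)^2 / p i`,
equals the variance in fitness. -/
theorem fisher_speed_sq_eq_variance
    (n : ℕ) (P : Fin n → ℝ → ℝ) (f : Fin n → (Fin n → ℝ) → ℝ)
    (hpos : ∀ i t, 0 < P i t)
    (hPdiff : ∀ i, Differentiable ℝ (P i))
    (hcont : ∀ i, ContinuousOn (f i) {x : Fin n → ℝ | ∀ j, 0 ≤ x j})
    (hLV : ∀ i t, HasDerivAt (P i) (f i (fun j => P j t) * P i t) t)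
    (p : Fin n → ℝ → ℝ)
    (hp : ∀ i t, p i t = P i t / ∑ j, P j t)
    (fbar : ℝ → ℝ)
    (hfbar : ∀ t, fbar t = ∑ j, p j t * f j (fun k => P k t))
    (t : ℝ) :
    ∑ i, (deriv (p i) t) ^ 2 / p i t
      = ∑ j, p j t * (f j (fun k => P k t) - fbar t) ^ 2 :=
  fisher_speed_sq_eq_variance_general n P f hpos hLV p hp fbar hfbar t
end
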